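/- arXiv:2412.08784 — 4 statements merged into one kernel-verified Lean document; each statement's English description precedes it below -/
import Mathlib

section
/- Let G be a group acting on a set X such that every orbit is infinite. Then for every pair of finite subsets A, B of X there exists g ∈ G with g(A) ∩ B = ∅. -/
/-!
If every translate `g • A` met `B`, then `G` would be covered by the finitely many sets
`{g | g • a = b}` with `a ∈ A`, `b ∈ B`. Each of them is empty or a left coset of the stabilizer
of `a`, so by B. H. Neumann's theorem on coset coverings some stabilizer has finite index, i.e.
some orbit is finite.
-/

open scoped Pointwise

namespace MulAction

variable {G X : Type*} [Group G] [MulAction G X]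

theorem setOf_smul_eq_eq_leftCoset_stabilizer {a : X} {g₀ : G} :
    {g : G | g • a = g₀ • a} = g₀ • (stabilizer G a : Set G) := by
  ext g
  rw [mem_leftCoset_iff, SetLike.mem_coe, mem_stabilizer_iff, mul_smul, inv_smul_eq_iff]
  exact Iff.rfl

theorem orbit_finite_of_finiteIndex_stabilizer {x : X} (h : (stabilizer G x).FiniteIndex) :
    (orbit G x).Finite :=
  Set.finite_of_ncard_ne_zero (index_stabilizer G x ▸ h.index_ne_zero)

theorem exists_orbit_finite_of_forall_exists_smul_mem {A B : Set X} (hA : A.Finite)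
    (hB : B.Finite) (h : ∀ g : G, ∃ a ∈ A, g • a ∈ B) : ∃ a ∈ A, (orbit G a).Finite := by
  let rep (p : X × X) : G := Classical.epsilon fun g : G => g • p.1 = p.2
  have hcovers : ⋃ p ∈ hA.toFinset ×ˢ hB.toFinset,
      rep p • (stabilizer G p.1 : Set G) = Set.univ := by
    refine Set.eq_univ_of_forall fun g => ?_
    obtain ⟨a, ha, hga⟩ := h g
    refine Set.mem_biUnion (x := (a, g • a)) (by simp [ha, hga]) ?_
    rw [← setOf_smul_eq_eq_leftCoset_stabilizer]
    exact (Classical.epsilon_spec (p := fun g' : G => g' • a = g • a) ⟨g, rfl⟩).symm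
  obtain ⟨p, hp, hfin⟩ := Subgroup.exists_finiteIndex_of_leftCoset_cover hcovers
  exact ⟨p.1, by simpa using (Finset.mem_product.mp hp).1,
    orbit_finite_of_finiteIndex_stabilizer hfin⟩

end MulAction

/-- Neumann's lemma: if a group `G` acts on a set `X` with all orbits infinite,
then for any finite subsets `A, B ⊆ X` there is `g ∈ G` with `g • A ∩ B = ∅`. -/
theorem neumann_lemma {G X : Type*} [Group G] [MulAction G X]
    (horb : ∀ x : X, (MulAction.orbit G x).Infinite)
    (A B : Set X) (hA : A.Finite) (hB : B.Finite) :
    ∃ g : G, ((fun x => g • x) '' A) ∩ B = ∅ := by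
  by_contra! hmeet
  have h : ∀ g : G, ∃ a ∈ A, g • a ∈ B := fun g => by
    obtain ⟨_, ⟨a, ha, rfl⟩, hb⟩ := hmeet g
    exact ⟨a, ha, hb⟩
  obtain ⟨a, -, hfin⟩ := MulAction.exists_orbit_finite_of_forall_exists_smul_mem hA hB h
  exact horb a hfin
end

section
/- Let G be a group acting by homeomorphisms on a compact metric space X. Assume: (1) there is a positive integer p such that for every ε > 0 there exist nonempty finite sets A, B ⊆ X of cardinality at most p and g ∈ G with g(X \ A^ε) ⊆ B^ε; and (2) the action of G has no finite orbits. Then there exist g₁, g₂ ∈ G and pairwise disjoint open sets U₁, U₂, V₁, V₂ ⊆ X with g₁(X \ U₁) ⊆ V₁ and g₂(X \ U₂) ⊆ V₂ (a ping-pong pair). -/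
open Metric
open scoped Pointwise

/-!
Compactness of the space of pairs of `p`-tuples lets one pass to a limit as `ε → 0`: there are
finite sets `A`, `B` such that for all neighbourhoods `U ⊇ A`, `V ⊇ B` some `g` maps `Uᶜ` into
`V`. Since all orbits are infinite, B. H. Neumann's lemma on coset covers gives `h` moving the
finite set `A ∪ B` off itself; the elements `h g h⁻¹ g` then contract `Uᶜ` into a neighbourhood
of `h • B`, which is disjoint from `A`. Conjugating this contracting pair by some `k` that moves
`A ∪ h • B` off itself gives a second one, disjoint from the first, and small thickenings of the
four finite sets form a ping-pong pair.
-/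

open Set Filter Topology MulAction

theorem MulAction.exists_disjoint_smul_of_infinite_orbits {G X : Type*} [Group G] [MulAction G X]
    (horb : ∀ x : X, (orbit G x).Infinite) {F : Set X} (hF : F.Finite) :
    ∃ g : G, Disjoint F (g • F) := by
  classical
  by_contra! hmeet
  -- `{g | g • x = y}` is empty or a left coset of `stabilizer G x`, and these cosets for
  -- `x, y ∈ F` would cover `G`.
  let σ : X × X → G := fun q => if h : ∃ g : G, g • q.1 = q.2 then h.choose else 1
  have hcover : ⋃ q ∈ hF.toFinset ×ˢ hF.toFinset, σ q • (stabilizer G q.1 : Set G) = univ := by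
    refine eq_univ_of_forall fun g => ?_
    obtain ⟨_, hyF, x, hxF, rfl⟩ := not_disjoint_iff.1 (hmeet g)
    have hex : ∃ g' : G, g' • x = g • x := ⟨g, rfl⟩
    refine mem_biUnion (x := (x, g • x)) (by simp [hxF, hyF]) ?_
    rw [mem_leftCoset_iff, SetLike.mem_coe, mem_stabilizer_iff, mul_smul, inv_smul_eq_iff]
    simp only [σ, dif_pos hex]
    exact hex.choose_spec.symm
  obtain ⟨q, -, hq⟩ := Subgroup.exists_finiteIndex_of_leftCoset_cover hcover
  exact horb q.1 (finite_of_ncard_ne_zero (index_stabilizer G q.1 ▸ hq.index_ne_zero))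

theorem Set.Finite.exists_fin_range_eq {X : Type*} {A : Set X} {p : ℕ} (hA : A.Finite)
    (hne : A.Nonempty) (hcard : A.ncard ≤ p) : ∃ a : Fin p → X, range a = A := by
  classical
  obtain ⟨x₀, hx₀⟩ := hne
  set l := hA.toFinset.toList
  have hl : l.length ≤ p := by rwa [Finset.length_toList, ← ncard_eq_toFinset_card A hA]
  refine ⟨fun i => l.getD i x₀, subset_antisymm ?_ fun x hx => ?_⟩
  · rintro _ ⟨i, rfl⟩
    dsimp only
    by_cases hi : (i : ℕ) < l.length
    · rw [List.getD_eq_getElem _ _ hi]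
      exact hA.mem_toFinset.1 (Finset.mem_toList.1 (List.getElem_mem hi))
    · rwa [List.getD_eq_default _ _ (not_lt.1 hi)]
  · obtain ⟨i, hi, rfl⟩ := List.mem_iff_getElem.1 (by simpa [l] using hx : x ∈ l)
    exact ⟨⟨i, hi.trans_le hl⟩, List.getD_eq_getElem _ _ hi⟩

def IsContractingPair (G : Type*) {X : Type*} [SMul G X] [TopologicalSpace X] (A B : Set X) :
    Prop :=
  ∀ U V : Set X, IsOpen U → IsOpen V → A ⊆ U → B ⊆ V → ∃ g : G, g • Uᶜ ⊆ V

namespace IsContractingPair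

variable {G X : Type*} [Group G] [MulAction G X] [TopologicalSpace X] [ContinuousConstSMul G X]
  {A B : Set X}

theorem smul (hAB : IsContractingPair G A B) (k : G) : IsContractingPair G (k • A) (k • B) := by
  intro U V hU hV hAU hBV
  obtain ⟨g, hg⟩ := hAB (k⁻¹ • U) (k⁻¹ • V) (hU.smul _) (hV.smul _)
    (smul_set_subset_iff_subset_inv_smul_set.1 hAU) (smul_set_subset_iff_subset_inv_smul_set.1 hBV)
  refine ⟨k * g * k⁻¹, ?_⟩
  calc (k * g * k⁻¹) • Uᶜ = k • g • (k⁻¹ • U)ᶜ := by rw [mul_smul, mul_smul, smul_set_compl]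
    _ ⊆ k • k⁻¹ • V := smul_set_mono hg
    _ = V := smul_inv_smul k V

theorem smul_right [T2Space X] (hAB : IsContractingPair G A B) (hA : IsCompact A)
    (hB : IsCompact B) {h : G} (hdisj : Disjoint (h • A) B) : IsContractingPair G A (h • B) := by
  obtain ⟨O₁, O₂, hO₁, hO₂, hAO₁, hBO₂, hO⟩ :=
    SeparatedNhds.of_isCompact_isCompact hA (hB.smul h⁻¹) (disjoint_smul_set_left.1 hdisj)
  intro U V hU hV hAU hBV
  obtain ⟨g, hg⟩ := hAB (U ∩ O₁) (h⁻¹ • V ∩ h • O₂) (hU.inter hO₁)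
    ((hV.smul _).inter (hO₂.smul _)) (subset_inter hAU hAO₁)
    (subset_inter (smul_set_subset_iff_subset_inv_smul_set.1 hBV) (subset_smul_set_iff.2 hBO₂))
  -- `g` pushes `Uᶜ` into `h • O₂`, which `h⁻¹` carries off `O₁`, so `g` can be applied again.
  have hback : h⁻¹ • g • Uᶜ ⊆ (U ∩ O₁)ᶜ := by
    have hgU : g • Uᶜ ⊆ h • O₂ :=
      (smul_set_mono (compl_subset_compl.2 inter_subset_left)).trans (hg.trans inter_subset_right)
    exact (subset_smul_set_iff.1 hgU).trans
      (hO.subset_compl_left.trans (compl_subset_compl.2 inter_subset_right))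
  refine ⟨h * g * h⁻¹ * g, ?_⟩
  calc (h * g * h⁻¹ * g) • Uᶜ = h • g • h⁻¹ • g • Uᶜ := by simp only [mul_smul]
    _ ⊆ h • g • (U ∩ O₁)ᶜ := smul_set_mono (smul_set_mono hback)
    _ ⊆ h • h⁻¹ • V := smul_set_mono (hg.trans inter_subset_left)
    _ = V := smul_inv_smul h V

end IsContractingPair

section MetricSpace

variable {X : Type*} [MetricSpace X]

theorem exists_pos_eventually_cthickening_range_subset {ι : Type*} [Fintype ι] {a : ι → X}
    {U : Set X} (hU : IsOpen U) (haU : range a ⊆ U) :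
    ∃ δ > 0, ∀ᶠ a' in 𝓝 a, cthickening δ (range a') ⊆ U := by
  obtain ⟨δ, hδ, hδU⟩ := (finite_range a).isCompact.exists_cthickening_subset_open hU haU
  refine ⟨δ / 2, half_pos hδ, ?_⟩
  filter_upwards [ball_mem_nhds a (half_pos hδ)] with a' ha'
  have hclose : range a' ⊆ cthickening (δ / 2) (range a) := by
    rintro _ ⟨i, rfl⟩
    exact mem_cthickening_of_dist_le _ (a i) _ _ ⟨i, rfl⟩
      ((dist_le_pi_dist a' a i).trans (mem_ball.1 ha').le)
  calc cthickening (δ / 2) (range a') ⊆ cthickening (δ / 2) (cthickening (δ / 2) (range a)) :=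
        cthickening_subset_of_subset _ hclose
    _ ⊆ cthickening (δ / 2 + δ / 2) (range a) :=
        cthickening_cthickening_subset (half_pos hδ).le (half_pos hδ).le _
    _ ⊆ U := by rwa [add_halves]

theorem exists_isContractingPair_range [CompactSpace X] {G ι : Type*} [SMul G X] [Fintype ι]
    (hcontract : ∀ ε > (0 : ℝ), ∃ (a b : ι → X) (g : G),
      g • (cthickening ε (range a))ᶜ ⊆ cthickening ε (range b)) :
    ∃ a b : ι → X, IsContractingPair G (range a) (range b) := by
  choose a b g hg using fun n : ℕ => hcontract (1 / (n + 1)) Nat.one_div_pos_of_nat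
  obtain ⟨q, φ, hφ, hq⟩ := CompactSpace.tendsto_subseq fun n => (a n, b n)
  have hε : Tendsto (fun n => 1 / ((φ n : ℝ) + 1)) atTop (𝓝 0) :=
    tendsto_one_div_add_atTop_nhds_zero_nat.comp hφ.tendsto_atTop
  refine ⟨q.1, q.2, fun U V hU hV hAU hBV => ?_⟩
  obtain ⟨δ, hδ, hδU⟩ := exists_pos_eventually_cthickening_range_subset hU hAU
  obtain ⟨δ', hδ', hδ'V⟩ := exists_pos_eventually_cthickening_range_subset hV hBV
  obtain ⟨n, hnU, hnV, hnδ, hnδ'⟩ :=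
    ((hq.fst_nhds.eventually hδU).and <| (hq.snd_nhds.eventually hδ'V).and <|
      (hε.eventually (gt_mem_nhds hδ)).and (hε.eventually (gt_mem_nhds hδ'))).exists
  refine ⟨g (φ n), ?_⟩
  calc g (φ n) • Uᶜ ⊆ g (φ n) • (cthickening (1 / ((φ n : ℝ) + 1)) (range (a (φ n))))ᶜ :=
        smul_set_mono (compl_subset_compl.2 ((cthickening_mono hnδ.le _).trans hnU))
    _ ⊆ cthickening (1 / ((φ n : ℝ) + 1)) (range (b (φ n))) := hg _
    _ ⊆ V := (cthickening_mono hnδ'.le _).trans hnV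

theorem Set.Finite.eventually_disjoint_thickening {F : Set X} (hF : F.Finite) :
    ∀ᶠ ρ in 𝓝[>] (0 : ℝ), ∀ S ⊆ F, ∀ T ⊆ F, Disjoint S T →
      Disjoint (thickening ρ S) (thickening ρ T) := by
  refine (eventually_all_finite hF.finite_subsets).2 fun S hS =>
    (eventually_all_finite hF.finite_subsets).2 fun T hT => ?_
  by_cases hST : Disjoint S T
  · obtain ⟨δ, hδ, hδST⟩ :=
      hST.exists_thickenings (hF.subset hS).isCompact (hF.subset hT).isClosed
    filter_upwards [Ioc_mem_nhdsGT hδ] with ρ hρ _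
    exact hδST.mono (thickening_mono hρ.2 _) (thickening_mono hρ.2 _)
  · exact Eventually.of_forall fun _ h => absurd h hST

end MetricSpace

theorem IsContractingPair.exists_pingPong {G X : Type*} [Group G] [MetricSpace X] [MulAction G X]
    [ContinuousConstSMul G X] {A B : Set X} (hAB : IsContractingPair G A B) (hA : A.Finite)
    (hB : B.Finite) (hdisj : Disjoint A B) {k : G} (hk : Disjoint (A ∪ B) (k • (A ∪ B))) :
    ∃ (g₁ g₂ : G) (U₁ U₂ V₁ V₂ : Set X),
      IsOpen U₁ ∧ IsOpen U₂ ∧ IsOpen V₁ ∧ IsOpen V₂ ∧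
      Disjoint U₁ U₂ ∧ Disjoint U₁ V₁ ∧ Disjoint U₁ V₂ ∧
      Disjoint U₂ V₁ ∧ Disjoint U₂ V₂ ∧ Disjoint V₁ V₂ ∧
      g₁ • U₁ᶜ ⊆ V₁ ∧ g₂ • U₂ᶜ ⊆ V₂ := by
  set F := (A ∪ B) ∪ k • (A ∪ B)
  have hAF : A ⊆ F := subset_union_left.trans subset_union_left
  have hBF : B ⊆ F := subset_union_right.trans subset_union_left
  have hkAF : k • A ⊆ F := (smul_set_mono subset_union_left).trans subset_union_right
  have hkBF : k • B ⊆ F := (smul_set_mono subset_union_right).trans subset_union_right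
  obtain ⟨ρ, hsep, hρ⟩ :=
    (((hA.union hB).union ((hA.union hB).smul_set (a := k))).eventually_disjoint_thickening.and
      self_mem_nhdsWithin).exists
  obtain ⟨g₁, hg₁⟩ := hAB _ _ isOpen_thickening isOpen_thickening
    (self_subset_thickening hρ A) (self_subset_thickening hρ B)
  obtain ⟨g₂, hg₂⟩ := hAB.smul k _ _ isOpen_thickening isOpen_thickening
    (self_subset_thickening hρ (k • A)) (self_subset_thickening hρ (k • B))
  refine ⟨g₁, g₂, _, _, _, _, isOpen_thickening, isOpen_thickening, isOpen_thickening,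
    isOpen_thickening, hsep _ hAF _ hkAF ?_, hsep _ hAF _ hBF hdisj, hsep _ hAF _ hkBF ?_,
    hsep _ hkAF _ hBF ?_, hsep _ hkAF _ hkBF (disjoint_smul_set.2 hdisj), hsep _ hBF _ hkBF ?_,
    hg₁, hg₂⟩
  · exact hk.mono subset_union_left (smul_set_mono subset_union_left)
  · exact hk.mono subset_union_left (smul_set_mono subset_union_right)
  · exact (hk.mono subset_union_right (smul_set_mono subset_union_left)).symm
  · exact hk.mono subset_union_right (smul_set_mono subset_union_right)

theorem ping_pong_pair_criterion_general {G X : Type*} [Group G] [MetricSpace X] [CompactSpace X]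
    [MulAction G X] (hcont : ∀ g : G, Continuous (fun x : X => g • x))
    (p : ℕ)
    (hcontract : ∀ ε > (0 : ℝ), ∃ (A B : Set X) (g : G),
      A.Nonempty ∧ B.Nonempty ∧ A.Finite ∧ B.Finite ∧
      A.ncard ≤ p ∧ B.ncard ≤ p ∧
      (fun x => g • x) '' (cthickening ε A)ᶜ ⊆ cthickening ε B)
    (horb : ∀ x : X, (MulAction.orbit G x).Infinite) :
    ∃ (g₁ g₂ : G) (U₁ U₂ V₁ V₂ : Set X),
      IsOpen U₁ ∧ IsOpen U₂ ∧ IsOpen V₁ ∧ IsOpen V₂ ∧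
      Disjoint U₁ U₂ ∧ Disjoint U₁ V₁ ∧ Disjoint U₁ V₂ ∧
      Disjoint U₂ V₁ ∧ Disjoint U₂ V₂ ∧ Disjoint V₁ V₂ ∧
      (fun x => g₁ • x) '' U₁ᶜ ⊆ V₁ ∧ (fun x => g₂ • x) '' U₂ᶜ ⊆ V₂ := by
  have : ContinuousConstSMul G X := ⟨hcont⟩
  obtain ⟨a, b, hab⟩ : ∃ a b : Fin p → X, IsContractingPair G (range a) (range b) := by
    refine exists_isContractingPair_range fun ε hε => ?_
    obtain ⟨A, B, g, hA, hB, hAfin, hBfin, hAp, hBp, hg⟩ := hcontract ε hε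
    obtain ⟨a, rfl⟩ := hAfin.exists_fin_range_eq hA hAp
    obtain ⟨b, rfl⟩ := hBfin.exists_fin_range_eq hB hBp
    exact ⟨a, b, g, by rwa [← image_smul]⟩
  have hA : (range a).Finite := finite_range a
  have hB : (range b).Finite := finite_range b
  obtain ⟨h, hh⟩ := exists_disjoint_smul_of_infinite_orbits horb (hA.union hB)
  have hcontr : IsContractingPair G (range a) (h • range b) :=
    hab.smul_right hA.isCompact hB.isCompact
      (hh.symm.mono (smul_set_mono subset_union_left) subset_union_right)
  obtain ⟨k, hk⟩ := exists_disjoint_smul_of_infinite_orbits horb (hA.union (hB.smul_set (a := h)))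
  simpa only [image_smul] using hcontr.exists_pingPong hA (hB.smul_set (a := h))
    (hh.mono subset_union_left (smul_set_mono subset_union_right)) hk

/-- Ping-pong criterion (Malicet–Militon): if a group action on a compact metric space has
uniformly bounded-cardinality "contracting" pairs for every `ε > 0` and has no finite
orbits, then there is a ping-pong pair. -/
theorem ping_pong_pair_criterion {G X : Type*} [Group G] [MetricSpace X] [CompactSpace X]
    [MulAction G X] (hcont : ∀ g : G, Continuous (fun x : X => g • x))
    (p : ℕ) (hp : 0 < p)
    (hcontract : ∀ ε > (0 : ℝ), ∃ (A B : Set X) (g : G),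
      A.Nonempty ∧ B.Nonempty ∧ A.Finite ∧ B.Finite ∧
      A.ncard ≤ p ∧ B.ncard ≤ p ∧
      (fun x => g • x) '' (cthickening ε A)ᶜ ⊆ cthickening ε B)
    (horb : ∀ x : X, (MulAction.orbit G x).Infinite) :
    ∃ (g₁ g₂ : G) (U₁ U₂ V₁ V₂ : Set X),
      IsOpen U₁ ∧ IsOpen U₂ ∧ IsOpen V₁ ∧ IsOpen V₂ ∧
      Disjoint U₁ U₂ ∧ Disjoint U₁ V₁ ∧ Disjoint U₁ V₂ ∧
      Disjoint U₂ V₁ ∧ Disjoint U₂ V₂ ∧ Disjoint V₁ V₂ ∧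
      (fun x => g₁ • x) '' U₁ᶜ ⊆ V₁ ∧ (fun x => g₂ • x) '' U₂ᶜ ⊆ V₂ :=
  ping_pong_pair_criterion_general hcont p hcontract horb
end

section
/- Let G be a group acting by homeomorphisms on a compact metric space X such that condition (1) of the ping-pong criterion holds: there is p ∈ ℕ such that for every ε > 0 there exist finite sets A, B of cardinality at most p and g ∈ G with g(X \ A^ε) ⊆ B^ε. Then, by compactness, there exists a single contraction pair: nonempty finite sets A, B ⊆ X of cardinality at most p such that for every ε > 0 some g ∈ G satisfies g(X \ A^ε) ⊆ B^ε. -/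
/-!
Pad every witness set of size at most `p` to a `p`-tuple by repeating points, so that the witnesses
at scales `1 / (n + 1)` form a sequence in the compact space `(Fin p → X) × (Fin p → X)`. If a pair
of tuples `(a, b)` is within `δ` of a cluster point `(a', b')`, then `range a ⊆ (range a')^δ`, so a
contraction of `(range a, range b)` at scale `r` is a contraction of `(range a', range b')` at scale
`r + δ`; choosing both `r` and `δ` below `ε / 2` gives scale `ε`.
-/

open Metric Set Filter Topology

theorem Set.Finite.exists_fin_range_eq_s14 {X : Type*} {S : Set X} (hne : S.Nonempty)
    (hfin : S.Finite) {p : ℕ} (hcard : S.ncard ≤ p) : ∃ f : Fin p → X, range f = S := by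
  have := hfin.fintype
  have := hne.to_subtype
  obtain ⟨e⟩ : Nonempty (S ↪ Fin p) := Function.Embedding.nonempty_of_card_le <| by
    rwa [Fintype.card_fin, ← Nat.card_eq_fintype_card, Nat.card_coe_set_eq]
  exact ⟨(↑) ∘ Function.invFun e, by
    rw [range_comp, (Function.invFun_surjective e.injective).range_eq, image_univ,
      Subtype.range_coe]⟩

theorem range_subset_cthickening_range_of_dist_le {ι X : Type*} [Fintype ι]
    [PseudoMetricSpace X] {a b : ι → X} {δ : ℝ} (h : dist a b ≤ δ) :
    range a ⊆ cthickening δ (range b) := by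
  rintro _ ⟨i, rfl⟩
  exact mem_cthickening_of_dist_le _ _ _ _ (mem_range_self i) ((dist_le_pi_dist a b i).trans h)

theorem cthickening_subset_cthickening_of_subset_cthickening {X : Type*} [PseudoMetricSpace X]
    {S T : Set X} {r δ ε : ℝ} (hr : 0 ≤ r) (hδ : 0 ≤ δ) (hε : r + δ ≤ ε)
    (h : S ⊆ cthickening δ T) : cthickening r S ⊆ cthickening ε T :=
  (cthickening_subset_of_subset r h).trans <|
    (cthickening_cthickening_subset hr hδ T).trans (cthickening_mono hε T)

section Contraction

variable (G : Type*) {X : Type*} [SMul G X] [PseudoMetricSpace X]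

def ContractsAt (ε : ℝ) (A B : Set X) : Prop :=
  ∃ g : G, (fun x => g • x) '' (cthickening ε A)ᶜ ⊆ cthickening ε B

variable {G}

theorem ContractsAt.of_subset_cthickening {A B A' B' : Set X} {r δ ε : ℝ}
    (h : ContractsAt G r A B) (hr : 0 ≤ r) (hδ : 0 ≤ δ) (hε : r + δ ≤ ε)
    (hA : A ⊆ cthickening δ A') (hB : B ⊆ cthickening δ B') : ContractsAt G ε A' B' := by
  obtain ⟨g, hg⟩ := h
  refine ⟨g, ?_⟩
  calc (fun x => g • x) '' (cthickening ε A')ᶜ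
      ⊆ (fun x => g • x) '' (cthickening r A)ᶜ :=
        image_mono (compl_subset_compl.2
          (cthickening_subset_cthickening_of_subset_cthickening hr hδ hε hA))
    _ ⊆ cthickening r B := hg
    _ ⊆ cthickening ε B' := cthickening_subset_cthickening_of_subset_cthickening hr hδ hε hB

end Contraction

theorem exists_contraction_pair_general {G X : Type*} [Group G] [MetricSpace X] [CompactSpace X]
    [MulAction G X]
    (p : ℕ) (hp : 0 < p)
    (hcontract : ∀ ε > (0 : ℝ), ∃ (A B : Set X) (g : G),
      A.Nonempty ∧ B.Nonempty ∧ A.Finite ∧ B.Finite ∧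
      A.ncard ≤ p ∧ B.ncard ≤ p ∧
      (fun x => g • x) '' (cthickening ε A)ᶜ ⊆ cthickening ε B) :
    ∃ A B : Set X, A.Nonempty ∧ B.Nonempty ∧ A.Finite ∧ B.Finite ∧
      A.ncard ≤ p ∧ B.ncard ≤ p ∧
      ∀ ε > (0 : ℝ), ∃ g : G,
        (fun x => g • x) '' (cthickening ε A)ᶜ ⊆ cthickening ε B := by
  have : Nonempty (Fin p) := ⟨⟨0, hp⟩⟩
  have htuple (n : ℕ) : ∃ ab : (Fin p → X) × (Fin p → X),
      ContractsAt G (1 / (n + 1)) (range ab.1) (range ab.2) := by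
    obtain ⟨A, B, g, hAne, hBne, hAfin, hBfin, hAp, hBp, hg⟩ := hcontract _ Nat.one_div_pos_of_nat
    obtain ⟨a, rfl⟩ := hAfin.exists_fin_range_eq_s14 hAne hAp
    obtain ⟨b, rfl⟩ := hBfin.exists_fin_range_eq_s14 hBne hBp
    exact ⟨(a, b), g, hg⟩
  choose u hu using htuple
  obtain ⟨c, hc⟩ : ∃ c, MapClusterPt c atTop u := exists_clusterPt_of_compactSpace _
  refine ⟨range c.1, range c.2, range_nonempty _, range_nonempty _, finite_range _,
    finite_range _, by simpa using Finite.card_range_le c.1,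
    by simpa using Finite.card_range_le c.2, fun ε hε => ?_⟩
  obtain ⟨n, hnc, hnε⟩ := ((hc.frequently (closedBall_mem_nhds c (half_pos hε))).and_eventually
    (tendsto_one_div_add_atTop_nhds_zero_nat.eventually (ge_mem_nhds (half_pos hε)))).exists
  rw [Prod.dist_eq, max_le_iff] at hnc
  exact (hu n).of_subset_cthickening Nat.one_div_pos_of_nat.le (half_pos hε).le (by linarith)
    (range_subset_cthickening_range_of_dist_le hnc.1)
    (range_subset_cthickening_range_of_dist_le hnc.2)

/-- Extraction of a contraction pair: if for every `ε > 0` there are finite sets of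
cardinality at most `p` witnessing `ε`-contraction, then by compactness a single pair
`(A, B)` works for all `ε > 0` simultaneously. -/
theorem exists_contraction_pair {G X : Type*} [Group G] [MetricSpace X] [CompactSpace X]
    [MulAction G X] (hcont : ∀ g : G, Continuous (fun x : X => g • x))
    (p : ℕ) (hp : 0 < p)
    (hcontract : ∀ ε > (0 : ℝ), ∃ (A B : Set X) (g : G),
      A.Nonempty ∧ B.Nonempty ∧ A.Finite ∧ B.Finite ∧
      A.ncard ≤ p ∧ B.ncard ≤ p ∧
      (fun x => g • x) '' (cthickening ε A)ᶜ ⊆ cthickening ε B) :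
    ∃ A B : Set X, A.Nonempty ∧ B.Nonempty ∧ A.Finite ∧ B.Finite ∧
      A.ncard ≤ p ∧ B.ncard ≤ p ∧
      ∀ ε > (0 : ℝ), ∃ g : G,
        (fun x => g • x) '' (cthickening ε A)ᶜ ⊆ cthickening ε B :=
  exists_contraction_pair_general p hp hcontract
end

section
/- Let X be a compact metric space and h a homeomorphism of X. Suppose X decomposes as a disjoint union of h-invariant clopen sets U and V, where h restricted to U is an isometry, and V contains finite disjoint sets R (repelling) and A (attracting) of h-periodic points such that for every ε > 0 there is N ∈ ℕ with h^k(V \ R^ε) ⊆ A^ε for all k ≥ N. Then for every ε > 0 there exists n ≥ 1 with d(h^n(x), x) ≤ ε for all x ∈ U and h^n(V \ R^ε) ⊆ A^ε. -/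
open Metric

/-- Combining recurrence of isometries with north–south dynamics: if a homeomorphism `h`
of a compact metric space decomposes `X = U ⊔ V` into invariant clopen pieces, acts as
an isometry on `U`, and has finite disjoint sets `R` (repelling) and `A` (attracting) of
periodic points in `V` with `h^k (V \ R^ε) ⊆ A^ε` for all large `k`, then for every
`ε > 0` some power `h^n` (`n ≥ 1`) moves every point of `U` by at most `ε` and maps
`V \ R^ε` into `A^ε`. -/
theorem power_close_to_identity_and_contracting {X : Type*} [MetricSpace X] [CompactSpace X]
    (h : X ≃ₜ X) (U V : Set X) (hUclopen : IsClopen U) (hVclopen : IsClopen V)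
    (hdisj : Disjoint U V) (hcover : U ∪ V = Set.univ)
    (hUinv : h '' U = U) (hVinv : h '' V = V)
    (hiso : ∀ x ∈ U, ∀ y ∈ U, dist (h x) (h y) = dist x y)
    (R A : Set X) (hRfin : R.Finite) (hAfin : A.Finite) (hRA : Disjoint R A)
    (hRV : R ⊆ V) (hAV : A ⊆ V)
    (hRper : ∀ x ∈ R, ∃ n : ℕ, 0 < n ∧ (⇑h)^[n] x = x)
    (hAper : ∀ x ∈ A, ∃ n : ℕ, 0 < n ∧ (⇑h)^[n] x = x)
    (hNS : ∀ ε > (0 : ℝ), ∃ N : ℕ, ∀ k ≥ N,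
      (⇑h)^[k] '' (V \ cthickening ε R) ⊆ cthickening ε A) :
    ∀ ε > (0 : ℝ), ∃ n : ℕ, 1 ≤ n ∧
      (∀ x ∈ U, dist ((⇑h)^[n] x) x ≤ ε) ∧
      (⇑h)^[n] '' (V \ cthickening ε R) ⊆ cthickening ε A := by
  intro ε hε
  -- basic facts: iterates preserve U and are isometries on U
  have hmapsU : ∀ x ∈ U, h x ∈ U := fun x hx => hUinv ▸ Set.mem_image_of_mem h hx
  have hUn : ∀ n : ℕ, ∀ x ∈ U, (⇑h)^[n] x ∈ U := by
    intro n
    induction n with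
    | zero => intro x hx; simpa using hx
    | succ k ih =>
      intro x hx
      rw [Function.iterate_succ_apply']
      exact hmapsU _ (ih x hx)
  have hison : ∀ n : ℕ, ∀ x ∈ U, ∀ y ∈ U, dist ((⇑h)^[n] x) ((⇑h)^[n] y) = dist x y := by
    intro n
    induction n with
    | zero => intro x _ y _; simp
    | succ k ih =>
      intro x hx y hy
      rw [Function.iterate_succ_apply', Function.iterate_succ_apply',
        hiso _ (hUn k x hx) _ (hUn k y hy), ih x hx y hy]
  -- get N from the north-south dynamics
  obtain ⟨N, hN⟩ := hNS ε hε
  set M : ℕ := N + 1 with hM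
  -- finite (ε/3)-net of U inside U
  have hUcompact : IsCompact U := hUclopen.isClosed.isCompact
  obtain ⟨t, htU, htfin, htcover⟩ :=
    finite_approx_of_totallyBounded hUcompact.totallyBounded (ε / 3) (by linarith)
  -- the sequence k ↦ (h^[k*M] c)_{c ∈ t} in the compact space (t → X)
  have : ∃ i j : ℕ, i < j ∧ ∀ c : {x // x ∈ htfin.toFinset},
      dist ((⇑h)^[i * M] (c : X)) ((⇑h)^[j * M] (c : X)) ≤ ε / 3 := by
    set y : ℕ → ({x // x ∈ htfin.toFinset} → X) := fun k c => (⇑h)^[k * M] (c : X) with hy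
    obtain ⟨a, φ, hφ, hconv⟩ := CompactSpace.tendsto_subseq y
    have := Metric.tendsto_atTop.1 hconv (ε / 6) (by linarith)
    obtain ⟨K, hK⟩ := this
    refine ⟨φ K, φ (K + 1), hφ (Nat.lt_succ_self K), fun c => ?_⟩
    have h1 := hK K le_rfl
    have h2 := hK (K + 1) (Nat.le_succ K)
    have d1 : dist (y (φ K) c) (a c) ≤ ε / 6 :=
      le_trans (dist_le_pi_dist _ _ c) (le_of_lt h1)
    have d2 : dist (y (φ (K + 1)) c) (a c) ≤ ε / 6 :=
      le_trans (dist_le_pi_dist _ _ c) (le_of_lt h2)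
    calc dist ((⇑h)^[φ K * M] (c : X)) ((⇑h)^[φ (K + 1) * M] (c : X))
        ≤ dist (y (φ K) c) (a c) + dist (y (φ (K + 1)) c) (a c) := dist_triangle_right _ _ _
      _ ≤ ε / 6 + ε / 6 := add_le_add d1 d2
      _ = ε / 3 := by ring
  obtain ⟨i, j, hij, hnet⟩ := this
  refine ⟨(j - i) * M, ?_, ?_, ?_⟩
  · have : 1 ≤ j - i := Nat.one_le_iff_ne_zero.2 (Nat.sub_ne_zero_of_lt hij)
    calc 1 ≤ 1 * M := by simp [hM]
      _ ≤ (j - i) * M := Nat.mul_le_mul_right M this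
  · -- h^[(j-i)M] moves points of U by at most ε
    intro x hx
    -- pick a net point close to x
    obtain ⟨c, hc, hxc⟩ := Set.mem_iUnion₂.1 (htcover hx)
    have hcU : c ∈ U := htU hc
    have hcF : c ∈ htfin.toFinset := htfin.mem_toFinset.2 hc
    have hxc' : dist x c < ε / 3 := mem_ball.1 hxc
    have key : i * M + (j - i) * M = j * M := by
      rw [← Nat.add_mul, Nat.add_sub_cancel' (le_of_lt hij)]
    have e1 : dist ((⇑h)^[(j - i) * M] x) x
        = dist ((⇑h)^[j * M] x) ((⇑h)^[i * M] x) := by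
      have := hison (i * M) _ (hUn ((j - i) * M) x hx) x hx
      rw [← this, ← Function.iterate_add_apply, key]
    rw [e1]
    have t1 : dist ((⇑h)^[j * M] x) ((⇑h)^[j * M] c) = dist x c :=
      hison (j * M) x hx c hcU
    have t2 : dist ((⇑h)^[i * M] c) ((⇑h)^[i * M] x) = dist c x :=
      hison (i * M) c hcU x hx
    have t3 : dist ((⇑h)^[j * M] c) ((⇑h)^[i * M] c) ≤ ε / 3 := by
      rw [dist_comm]; exact hnet ⟨c, hcF⟩
    calc dist ((⇑h)^[j * M] x) ((⇑h)^[i * M] x)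
        ≤ dist ((⇑h)^[j * M] x) ((⇑h)^[j * M] c) + dist ((⇑h)^[j * M] c) ((⇑h)^[i * M] c)
          + dist ((⇑h)^[i * M] c) ((⇑h)^[i * M] x) := dist_triangle4 _ _ _ _
      _ = dist x c + dist ((⇑h)^[j * M] c) ((⇑h)^[i * M] c) + dist c x := by rw [t1, t2]
      _ ≤ ε / 3 + ε / 3 + ε / 3 := by
          have := hxc'.le
          have := (dist_comm c x ▸ hxc'.le)
          gcongr <;> assumption
      _ = ε := by ring
  · -- contraction on V
    apply hN
    have : 1 ≤ j - i := Nat.one_le_iff_ne_zero.2 (Nat.sub_ne_zero_of_lt hij)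
    calc N ≤ M := Nat.le_succ N
      _ = 1 * M := (one_mul M).symm
      _ ≤ (j - i) * M := Nat.mul_le_mul_right M this
end
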